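/- For d ≥ 2 and x ≥ d, the quantity f_{d,x} = c_{d,x} + (√(d²−1)/(2x)) arcsin(√(d²−1)/(2x)), where c_{d,x} = √(1 − (d²−1)/(4x²)), satisfies 0.85 ≤ 1 − 0.15d/x ≤ f_{d,x} ≤ 1 + 0.3d/x ≤ 1.3, and moreover the function x ↦ x·f_{d,x} has derivative √(1 − (d²−1)/(4x²)) ∈ [√(3)/2, 1] for x ≥ d. -/

import Mathlib

/-!
With `u = √(d² - 1) / (2x) ∈ [0, 1/2]` we have `f_{d,x} = G u` for the antiderivative
`G u = √(1 - u²) + u arcsin u` of `arcsin`. Since `G' = arcsin`, the derivative of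
`x ↦ x G(k / x)` is `G u - u arcsin u = √(1 - u²)`. The bounds on `f_{d,x}` come from
`u ≤ arcsin u ≤ tan (arcsin u) = u / √(1 - u²)`: the first gives `G u ≥ (1 - u²) + u² = 1`,
the second `G u ≤ 1 + u² / √(1 - u²)` with `u² ≤ d / (4x)` and `√(1 - u²) ≥ √3 / 2`.
-/

open Real

/-- `c_{d,x} = √(1 - (d²-1)/(4x²))`. -/
noncomputable def besselC (d x : ℝ) : ℝ := Real.sqrt (1 - (d ^ 2 - 1) / (4 * x ^ 2))

/-- `f_{d,x} = c_{d,x} + (√(d²-1)/(2x)) arcsin(√(d²-1)/(2x))`. -/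
noncomputable def besselF (d x : ℝ) : ℝ :=
  besselC d x + (Real.sqrt (d ^ 2 - 1) / (2 * x)) * Real.arcsin (Real.sqrt (d ^ 2 - 1) / (2 * x))

namespace Real

theorem self_le_arcsin {u : ℝ} (h₀ : 0 ≤ u) (h₁ : u ≤ 1) : u ≤ arcsin u := by
  simpa [sin_arcsin (by linarith) h₁] using sin_le (arcsin_nonneg.2 h₀)

theorem arcsin_le_div_sqrt_one_sub_sq {u : ℝ} (h₀ : 0 ≤ u) (h₁ : u < 1) :
    arcsin u ≤ u / √(1 - u ^ 2) := by
  simpa [tan_arcsin] using le_tan (arcsin_nonneg.2 h₀) (arcsin_lt_pi_div_two.2 h₁)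

end Real

noncomputable def arcsinAntideriv (u : ℝ) : ℝ := √(1 - u ^ 2) + u * arcsin u

theorem hasDerivAt_arcsinAntideriv {u : ℝ} (hu : u ^ 2 < 1) :
    HasDerivAt arcsinAntideriv (arcsin u) u := by
  obtain ⟨hu₁, hu₂⟩ := abs_lt.1 ((sq_lt_one_iff_abs_lt_one u).1 hu)
  have hpos : 0 < 1 - u ^ 2 := by linarith
  have hsqrt := ((hasDerivAt_pow 2 u).const_sub 1).sqrt hpos.ne'
  have harcsin := hasDerivAt_arcsin hu₁.ne' hu₂.ne
  refine (hsqrt.add ((hasDerivAt_id u).mul harcsin)).congr_deriv ?_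
  have hsqrt_pos := sqrt_pos.2 hpos
  simp only [id]
  field_simp
  ring

theorem hasDerivAt_mul_arcsinAntideriv_div {k x : ℝ} (hx : x ≠ 0) (hkx : (k / x) ^ 2 < 1) :
    HasDerivAt (fun t => t * arcsinAntideriv (k / t)) (√(1 - (k / x) ^ 2)) x := by
  have hinv : HasDerivAt (fun t => k / t) (-(k / x ^ 2)) x := by
    simpa [div_eq_mul_inv] using (hasDerivAt_inv hx).const_mul k
  refine ((hasDerivAt_id x).mul ((hasDerivAt_arcsinAntideriv hkx).comp x hinv)).congr_deriv ?_
  rw [id, Function.comp_apply, pow_two, ← div_div]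
  generalize k / x = u
  rw [arcsinAntideriv]
  field_simp
  ring

theorem one_le_arcsinAntideriv {u : ℝ} (h₀ : 0 ≤ u) (h₁ : u ≤ 1) : 1 ≤ arcsinAntideriv u := by
  have hsqrt : 1 - u ^ 2 ≤ √(1 - u ^ 2) := le_sqrt_self_iff.2 (by nlinarith)
  have harcsin : u ^ 2 ≤ u * arcsin u := by
    rw [sq]; exact mul_le_mul_of_nonneg_left (self_le_arcsin h₀ h₁) h₀
  unfold arcsinAntideriv
  linarith

theorem arcsinAntideriv_le {u : ℝ} (h₀ : 0 ≤ u) (h₁ : u < 1) :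
    arcsinAntideriv u ≤ 1 + u ^ 2 / √(1 - u ^ 2) := by
  have hsqrt : √(1 - u ^ 2) ≤ 1 := sqrt_le_one.2 (by nlinarith)
  have harcsin : u * arcsin u ≤ u ^ 2 / √(1 - u ^ 2) := by
    calc u * arcsin u ≤ u * (u / √(1 - u ^ 2)) :=
          mul_le_mul_of_nonneg_left (arcsin_le_div_sqrt_one_sub_sq h₀ h₁) h₀
      _ = u ^ 2 / √(1 - u ^ 2) := by ring
  unfold arcsinAntideriv
  linarith

theorem sq_sqrt_sq_sub_one_div_two_div {d : ℝ} (hd : 1 ≤ d ^ 2) (x : ℝ) :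
    (√(d ^ 2 - 1) / 2 / x) ^ 2 = (d ^ 2 - 1) / (4 * x ^ 2) := by
  rw [div_pow, div_pow, sq_sqrt (by linarith), div_div]
  ring

theorem besselF_eq_arcsinAntideriv {d : ℝ} (hd : 1 ≤ d ^ 2) (x : ℝ) :
    besselF d x = arcsinAntideriv (√(d ^ 2 - 1) / 2 / x) := by
  rw [besselF, besselC, arcsinAntideriv, sq_sqrt_sq_sub_one_div_two_div hd, div_div]

theorem hasDerivAt_mul_besselF {d x : ℝ} (hd : 1 ≤ d ^ 2) (hx : d ^ 2 - 1 < 4 * x ^ 2) :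
    HasDerivAt (fun t => t * besselF d t) (√(1 - (d ^ 2 - 1) / (4 * x ^ 2))) x := by
  have hx₀ : x ≠ 0 := by rintro rfl; linarith
  have hlt : (√(d ^ 2 - 1) / 2 / x) ^ 2 < 1 := by
    rwa [sq_sqrt_sq_sub_one_div_two_div hd, div_lt_one (by positivity)]
  simp only [besselF_eq_arcsinAntideriv hd]
  rw [← sq_sqrt_sq_sub_one_div_two_div hd]
  exact hasDerivAt_mul_arcsinAntideriv_div hx₀ hlt

/-- For `d ≥ 2` and `x ≥ d`: `0.85 ≤ 1 - 0.15d/x ≤ f_{d,x} ≤ 1 + 0.3d/x ≤ 1.3`, and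
`x ↦ x·f_{d,x}` has derivative `√(1 - (d²-1)/(4x²)) ∈ [√3/2, 1]`. -/
theorem besselF_bounds_and_deriv (d x : ℝ) (hd : 2 ≤ d) (hx : d ≤ x) :
    (0.85 ≤ 1 - 0.15 * d / x ∧ 1 - 0.15 * d / x ≤ besselF d x ∧
      besselF d x ≤ 1 + 0.3 * d / x ∧ 1 + 0.3 * d / x ≤ 1.3) ∧
    HasDerivAt (fun t => t * besselF d t) (Real.sqrt (1 - (d ^ 2 - 1) / (4 * x ^ 2))) x ∧
    Real.sqrt 3 / 2 ≤ Real.sqrt (1 - (d ^ 2 - 1) / (4 * x ^ 2)) ∧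
    Real.sqrt (1 - (d ^ 2 - 1) / (4 * x ^ 2)) ≤ 1 := by
  have hx₀ : 0 < x := by linarith
  have hd₁ : 1 ≤ d ^ 2 := by nlinarith
  have hdx₀ : 0 ≤ d / x := by positivity
  have hdx₁ : d / x ≤ 1 := div_le_one_of_le₀ hx hx₀.le
  have hderiv := hasDerivAt_mul_besselF (x := x) hd₁ (by nlinarith)
  rw [besselF_eq_arcsinAntideriv hd₁ x]
  set u := √(d ^ 2 - 1) / 2 / x
  have hu₀ : 0 ≤ u := by positivity
  have hu : u ^ 2 = (d ^ 2 - 1) / (4 * x ^ 2) := sq_sqrt_sq_sub_one_div_two_div hd₁ x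
  have hu_le : u ^ 2 ≤ d / x / 4 := by
    rw [hu, div_div, div_le_div_iff₀ (by positivity) (by positivity)]
    nlinarith [mul_le_mul_of_nonneg_left hx (by linarith : 0 ≤ d)]
  rw [← hu] at hderiv ⊢
  have hc : √3 / 2 ≤ √(1 - u ^ 2) := by
    rw [show √3 / 2 = √(3 / 4) by rw [sqrt_div' _ (by norm_num : (0 : ℝ) ≤ 4)]; norm_num]
    exact sqrt_le_sqrt (by linarith)
  have hc₀ : 17 / 20 ≤ √3 / 2 := by
    rw [le_div_iff₀ two_pos, le_sqrt (by norm_num) (by norm_num)]; norm_num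
  have hupper : u ^ 2 / √(1 - u ^ 2) ≤ 0.3 * (d / x) :=
    calc u ^ 2 / √(1 - u ^ 2) ≤ d / x / 4 / (17 / 20) := by gcongr; linarith
      _ ≤ 0.3 * (d / x) := by linarith
  simp only [mul_div_assoc]
  refine ⟨⟨by linarith, ?_, ?_, by linarith⟩, hderiv, hc, sqrt_le_one.2 (by nlinarith)⟩
  · linarith [one_le_arcsinAntideriv hu₀ (by nlinarith)]
  · linarith [arcsinAntideriv_le hu₀ (by nlinarith)]
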